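/- If t is a positive integer with t ≡ 5 or 9 (mod 12), then c₃(t) = (t³ − 16t² + 73t − 90)/6. -/

import Mathlib

/-!
Every 3×3 magic square over `ℤ` is Lucas's square with centre `c` and entries `c ± a`, `c ± b`,
`c ± (a + b)`, `c ± (a - b)`. So the squares counted by `c3 t` correspond to the triples
`(a, b, c)` with `|a| + |b| < c < t - |a| - |b|` whose square has distinct entries, which happens
exactly when `|a|` and `|b|` are nonzero and neither equals the other or twice the other.
Summing over the centre and folding the signs of `a` and `b`, `c3 t` is four times the sum of
`t - 2(x + y) - 1` over the positive pairs `(x, y)` off the lines `x = y`, `x = 2y`, `y = 2x`.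
Over all positive pairs this sum is `(t-1)(t-3)(t-5)/24` for odd `t`; on the three lines it is a
sum of arithmetic progressions whose value depends on `t` modulo 4 and 6, and for
`t ≡ 5, 9 (mod 12)` everything combines to `(t-2)(t-5)(t-9)/6`.
-/

/-- A 3×3 magic square with entries bounded above (strictly) by `t`: pairwise distinct
positive integer entries less than `t`, with all row sums, column sums, and both main
diagonal sums equal to one another. -/
def IsBoundedMagicSquare3 (t : ℕ) (M : Matrix (Fin 3) (Fin 3) ℕ) : Prop :=
  (∀ i j, 0 < M i j ∧ M i j < t) ∧
  (Function.Injective fun p : Fin 3 × Fin 3 => M p.1 p.2) ∧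
  ∃ s, (∀ i, ∑ j, M i j = s) ∧ (∀ j, ∑ i, M i j = s) ∧
    M 0 0 + M 1 1 + M 2 2 = s ∧ M 0 2 + M 1 1 + M 2 0 = s

/-- The number of 3×3 magic squares all of whose entries are less than `t`. -/
noncomputable def c3 (t : ℕ) : ℕ :=
  Set.ncard {M : Matrix (Fin 3) (Fin 3) ℕ | IsBoundedMagicSquare3 t M}

open Finset

def IsMagicSquare3 {R : Type*} [AddCommMonoid R] (M : Matrix (Fin 3) (Fin 3) R) : Prop :=
  ∃ s, (∀ i, ∑ j, M i j = s) ∧ (∀ j, ∑ i, M i j = s) ∧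
    M 0 0 + M 1 1 + M 2 2 = s ∧ M 0 2 + M 1 1 + M 2 0 = s

section Magic

variable {R S : Type*} [AddCommMonoid R] [AddCommMonoid S] {M : Matrix (Fin 3) (Fin 3) R}

theorem IsMagicSquare3.map (h : IsMagicSquare3 M) (f : R →+ S) : IsMagicSquare3 (M.map f) := by
  obtain ⟨s, hrow, hcol, hd, hd'⟩ := h
  refine ⟨f s, fun i => ?_, fun j => ?_, ?_, ?_⟩
  · simp only [Matrix.map_apply, ← map_sum, hrow]
  · simp only [Matrix.map_apply, ← map_sum, hcol]
  · simp only [Matrix.map_apply, ← map_add, hd]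
  · simp only [Matrix.map_apply, ← map_add, hd']

theorem IsMagicSquare3.of_map {f : R →+ S} (hf : Function.Injective f)
    (h : IsMagicSquare3 (M.map f)) : IsMagicSquare3 M := by
  obtain ⟨s, hrow, hcol, hd, hd'⟩ := h
  have hs : f (∑ j, M 0 j) = s := by simpa [map_sum] using hrow 0
  refine ⟨∑ j, M 0 j, fun i => hf ?_, fun j => hf ?_, hf ?_, hf ?_⟩
  · simpa [map_sum, hs] using hrow i
  · simpa [map_sum, hs] using hcol j
  · simpa [hs] using hd
  · simpa [hs] using hd'

end Magic

def lucasMatrix (a b c : ℤ) : Matrix (Fin 3) (Fin 3) ℤ :=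
  !![c - b, c + a + b, c - a; c - a + b, c, c + a - b; c + a, c - a - b, c + b]

theorem isMagicSquare3_lucasMatrix (a b c : ℤ) : IsMagicSquare3 (lucasMatrix a b c) := by
  refine ⟨3 * c, fun i => ?_, fun j => ?_, ?_, ?_⟩
  · fin_cases i <;> simp [lucasMatrix, Fin.sum_univ_three] <;> ring
  · fin_cases j <;> simp [lucasMatrix, Fin.sum_univ_three] <;> ring
  all_goals simp [lucasMatrix]; ring

theorem IsMagicSquare3.eq_lucasMatrix {M : Matrix (Fin 3) (Fin 3) ℤ} (h : IsMagicSquare3 M) :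
    M = lucasMatrix (M 2 0 - M 1 1) (M 2 2 - M 1 1) (M 1 1) := by
  obtain ⟨s, hrow, hcol, hd, hd'⟩ := h
  have r0 := hrow 0; have r1 := hrow 1; have r2 := hrow 2
  have c0 := hcol 0; have c1 := hcol 1; have c2 := hcol 2
  simp only [Fin.sum_univ_three] at r0 r1 r2 c0 c1 c2
  ext i j
  fin_cases i <;> fin_cases j <;> simp [lucasMatrix] <;> omega

def LucasGeneric (x y : ℕ) : Prop := x ≠ 0 ∧ y ≠ 0 ∧ x ≠ y ∧ x ≠ 2 * y ∧ y ≠ 2 * x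

instance (x y : ℕ) : Decidable (LucasGeneric x y) := by unfold LucasGeneric; infer_instance

theorem lucasMatrix_pos_lt_iff (t : ℕ) (a b : ℤ) (c : ℕ) :
    (∀ i j, 0 < lucasMatrix a b c i j ∧ lucasMatrix a b c i j < t) ↔
      a.natAbs + b.natAbs < c ∧ c + (a.natAbs + b.natAbs) < t := by
  constructor
  · intro h
    have h01 := h 0 1; have h10 := h 1 0; have h12 := h 1 2; have h21 := h 2 1
    simp [lucasMatrix] at h01 h10 h12 h21
    omega
  · intro h i j
    fin_cases i <;> fin_cases j <;> simp [lucasMatrix] <;> omega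

theorem injective_lucasMatrix_iff (a b c : ℤ) :
    (Function.Injective fun p : Fin 3 × Fin 3 => lucasMatrix a b c p.1 p.2) ↔
      LucasGeneric a.natAbs b.natAbs := by
  constructor
  · intro h
    have hne (p q : Fin 3 × Fin 3) (hpq : p ≠ q) :
        lucasMatrix a b c p.1 p.2 ≠ lucasMatrix a b c q.1 q.2 := h.ne hpq
    have h1 := hne (1, 1) (2, 0) (by decide)
    have h2 := hne (1, 1) (2, 2) (by decide)
    have h3 := hne (1, 1) (1, 2) (by decide)
    have h4 := hne (1, 1) (0, 1) (by decide)
    have h5 := hne (1, 0) (0, 0) (by decide)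
    have h6 := hne (0, 1) (0, 0) (by decide)
    have h7 := hne (1, 2) (0, 2) (by decide)
    have h8 := hne (0, 1) (0, 2) (by decide)
    simp [lucasMatrix] at h1 h2 h3 h4 h5 h6 h7 h8
    unfold LucasGeneric
    omega
  · rintro hg ⟨i, j⟩ ⟨k, l⟩ h
    unfold LucasGeneric at hg
    fin_cases i <;> fin_cases j <;> fin_cases k <;> fin_cases l <;>
      simp [lucasMatrix] at h ⊢ <;> omega

def lucasSquare (p : ℤ × ℤ × ℕ) : Matrix (Fin 3) (Fin 3) ℕ :=
  (lucasMatrix p.1 p.2.1 p.2.2).map Int.toNat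

noncomputable def lucasParams (t : ℕ) : Finset (ℤ × ℤ × ℕ) :=
  {p ∈ Icc (-t : ℤ) t ×ˢ Icc (-t : ℤ) t ×ˢ range t |
    LucasGeneric p.1.natAbs p.2.1.natAbs ∧ p.1.natAbs + p.2.1.natAbs < p.2.2 ∧
      p.2.2 + (p.1.natAbs + p.2.1.natAbs) < t}

theorem map_cast_lucasSquare {a b : ℤ} {c : ℕ} (h : a.natAbs + b.natAbs < c) :
    (lucasSquare (a, b, c)).map (Nat.castAddMonoidHom ℤ) = lucasMatrix a b c := by
  ext i j
  fin_cases i <;> fin_cases j <;> simp [lucasSquare, lucasMatrix] <;> omega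

theorem injOn_lucasSquare (t : ℕ) : Set.InjOn lucasSquare (lucasParams t) := by
  rintro ⟨a, b, c⟩ hp ⟨a', b', c'⟩ hp' h
  simp only [lucasParams, coe_filter, Set.mem_ofPred_eq] at hp hp'
  have h11 := congrFun (congrFun h 1) 1
  have h20 := congrFun (congrFun h 2) 0
  have h22 := congrFun (congrFun h 2) 2
  simp [lucasSquare, lucasMatrix] at h11 h20 h22
  simp only [Prod.mk.injEq]
  omega

theorem isBoundedMagicSquare3_lucasSquare {t : ℕ} {p : ℤ × ℤ × ℕ} (hp : p ∈ lucasParams t) :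
    IsBoundedMagicSquare3 t (lucasSquare p) := by
  obtain ⟨a, b, c⟩ := p
  obtain ⟨-, hgen, hpos, hlt⟩ := mem_filter.1 hp
  have hM := map_cast_lucasSquare hpos
  have hentry (i j) : (lucasSquare (a, b, c) i j : ℤ) = lucasMatrix a b c i j := by
    rw [← hM]; rfl
  refine ⟨fun i j => ?_, ?_, ?_⟩
  · have := (lucasMatrix_pos_lt_iff t a b c).2 ⟨hpos, hlt⟩ i j
    rw [← hentry] at this
    exact_mod_cast this
  · rw [← Function.Injective.of_comp_iff (Nat.cast_injective (R := ℤ))]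
    convert (injective_lucasMatrix_iff a b c).2 hgen using 1
    ext p; exact hentry p.1 p.2
  · exact IsMagicSquare3.of_map (f := Nat.castAddMonoidHom ℤ) (Nat.cast_injective (R := ℤ))
      (hM ▸ isMagicSquare3_lucasMatrix a b c)

theorem IsBoundedMagicSquare3.exists_lucasParams {t : ℕ} {M : Matrix (Fin 3) (Fin 3) ℕ}
    (h : IsBoundedMagicSquare3 t M) : ∃ p ∈ lucasParams t, lucasSquare p = M := by
  obtain ⟨hbound, hinj, hmagic⟩ := h
  have hM := ((show IsMagicSquare3 M from hmagic).map (Nat.castAddMonoidHom ℤ)).eq_lucasMatrix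
  simp only [Matrix.map_apply, Nat.coe_castAddMonoidHom] at hM
  set a : ℤ := M 2 0 - M 1 1
  set b : ℤ := M 2 2 - M 1 1
  have hentry (i j) : lucasMatrix a b (M 1 1) i j = M i j := by rw [← hM]; rfl
  have hpos_lt := (lucasMatrix_pos_lt_iff t a b (M 1 1)).1 fun i j => by
    rw [hentry]; exact_mod_cast hbound i j
  have hgen := (injective_lucasMatrix_iff a b (M 1 1)).1 <| by
    rw [← Function.Injective.of_comp_iff (Nat.cast_injective (R := ℤ))] at hinj
    convert hinj using 1
    ext p; exact hentry p.1 p.2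
  refine ⟨(a, b, M 1 1), mem_filter.2 ⟨?_, hgen, hpos_lt⟩, ?_⟩
  · simp only [mem_product, mem_Icc, mem_range]
    omega
  · ext i j
    simp [lucasSquare, hentry]

theorem setOf_isBoundedMagicSquare3_eq_image (t : ℕ) :
    {M | IsBoundedMagicSquare3 t M} = lucasSquare '' lucasParams t := by
  ext M
  exact ⟨fun h => h.exists_lucasParams,
    fun ⟨_, hp, hpM⟩ => hpM ▸ isBoundedMagicSquare3_lucasSquare hp⟩

theorem c3_eq_card_lucasParams (t : ℕ) : c3 t = #(lucasParams t) := by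
  rw [c3, setOf_isBoundedMagicSquare3_eq_image, (injOn_lucasSquare t).ncard_image,
    Set.ncard_coe_finset]

theorem card_filter_range_lt_and_add_lt (t n : ℕ) :
    #{c ∈ range t | n < c ∧ c + n < t} = t - (2 * n + 1) := by
  rw [show {c ∈ range t | n < c ∧ c + n < t} = Ioo n (t - n) by ext; simp; omega, Nat.card_Ioo]
  omega

theorem card_lucasParams (t : ℕ) :
    #(lucasParams t) = ∑ a ∈ Icc (-t : ℤ) t, ∑ b ∈ Icc (-t : ℤ) t,
      if LucasGeneric a.natAbs b.natAbs then t - (2 * (a.natAbs + b.natAbs) + 1) else 0 := by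
  simp only [lucasParams, card_filter, sum_product]
  refine sum_congr rfl fun a _ => sum_congr rfl fun b _ => ?_
  split_ifs with hgen
  · simp only [hgen, true_and, ← card_filter_range_lt_and_add_lt, card_filter]
  · simp [hgen]

theorem sum_Icc_neg_natAbs {M : Type*} [AddCommMonoid M] (n : ℕ) (f : ℕ → M) :
    ∑ a ∈ Icc (-n : ℤ) n, f a.natAbs = f 0 + 2 • ∑ x ∈ Icc 1 n, f x := by
  induction n with
  | zero => simp
  | succ n ih =>
    have hIcc : Icc (-(n + 1 : ℕ) : ℤ) (n + 1 : ℕ) =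
        insert (-(n + 1 : ℤ)) (insert (n + 1 : ℤ) (Icc (-n : ℤ) n)) := by
      ext; simp; omega
    rw [hIcc, sum_insert (by simp; omega), sum_insert (by simp), ih, sum_Icc_succ_top (by omega)]
    have h : ((n : ℤ) + 1).natAbs = n + 1 := by omega
    simp only [Int.natAbs_neg, h, smul_add, two_smul]
    abel

theorem c3_eq_four_mul_sum (t : ℕ) :
    c3 t = 4 * ∑ x ∈ Icc 1 t, ∑ y ∈ Icc 1 t,
      if LucasGeneric x y then t - (2 * (x + y) + 1) else 0 := by
  set g : ℕ → ℕ → ℕ := fun x y => if LucasGeneric x y then t - (2 * (x + y) + 1) else 0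
  have hg_left (y : ℕ) : g 0 y = 0 := if_neg fun h => h.1 rfl
  have hg_right (x : ℕ) : g x 0 = 0 := if_neg fun h => h.2.1 rfl
  calc c3 t = ∑ a ∈ Icc (-t : ℤ) t, ∑ b ∈ Icc (-t : ℤ) t, g a.natAbs b.natAbs := by
        rw [c3_eq_card_lucasParams, card_lucasParams]
    _ = ∑ a ∈ Icc (-t : ℤ) t, 2 * ∑ y ∈ Icc 1 t, g a.natAbs y := by
        simp only [sum_Icc_neg_natAbs, hg_right, zero_add, smul_eq_mul]
    _ = 4 * ∑ x ∈ Icc 1 t, ∑ y ∈ Icc 1 t, g x y := by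
        rw [sum_Icc_neg_natAbs t fun x => 2 * ∑ y ∈ Icc 1 t, g x y]
        simp only [hg_left, sum_const_zero, mul_zero, zero_add, smul_eq_mul, ← mul_sum]
        ring

theorem sum_Icc_sum_Icc_eq_sum_lucasGeneric_add {M : Type*} [AddCommMonoid M] (N : ℕ) (f : ℕ → M)
    (hf : ∀ n, N < n → f n = 0) :
    ∑ x ∈ Icc 1 N, ∑ y ∈ Icc 1 N, f (x + y) =
      ∑ x ∈ Icc 1 N, ∑ y ∈ Icc 1 N, (if LucasGeneric x y then f (x + y) else 0) +
        ∑ x ∈ Icc 1 N, f (2 * x) + 2 • ∑ x ∈ Icc 1 N, f (3 * x) := by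
  have hsplit : ∀ x ∈ Icc 1 N, ∀ y ∈ Icc 1 N, f (x + y) =
      (if LucasGeneric x y then f (x + y) else 0) + (if x = y then f (x + y) else 0) +
        (if x = 2 * y then f (x + y) else 0) + (if y = 2 * x then f (x + y) else 0) := by
    intro x hx y hy
    simp only [mem_Icc] at hx hy
    split_ifs <;> first | (simp only [LucasGeneric] at *; omega) | simp
  have hdiag : ∑ x ∈ Icc 1 N, ∑ y ∈ Icc 1 N, (if x = y then f (x + y) else 0) =
      ∑ x ∈ Icc 1 N, f (2 * x) :=
    sum_congr rfl fun x hx => by rw [sum_ite_eq, if_pos hx, two_mul]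
  have hleft : ∑ x ∈ Icc 1 N, ∑ y ∈ Icc 1 N, (if x = 2 * y then f (x + y) else 0) =
      ∑ x ∈ Icc 1 N, f (3 * x) := by
    rw [sum_comm]
    refine sum_congr rfl fun y hy => ?_
    rw [sum_ite_eq']
    split_ifs with h
    · ring_nf
    · rw [hf]; simp only [mem_Icc] at hy h; omega
  have hright : ∑ x ∈ Icc 1 N, ∑ y ∈ Icc 1 N, (if y = 2 * x then f (x + y) else 0) =
      ∑ x ∈ Icc 1 N, f (3 * x) := by
    refine sum_congr rfl fun x hx => ?_
    rw [sum_ite_eq']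
    split_ifs with h
    · ring_nf
    · rw [hf]; simp only [mem_Icc] at hx h; omega
  rw [sum_congr rfl fun x hx => sum_congr rfl (hsplit x hx)]
  simp only [sum_add_distrib, hdiag, hleft, hright, two_smul, add_assoc]

theorem sum_Icc_sub_two_mul_mul {R : Type*} [CommRing R] (A B : R) (L : ℕ) :
    ∑ x ∈ Icc 1 L, (A - 2 * B * x) = L * A - B * L * (L + 1) := by
  induction L with
  | zero => simp
  | succ L ih =>
    rw [sum_Icc_succ_top (by omega), ih]
    push_cast
    ring

theorem cast_sum_Icc_tsub (t d N L : ℕ) (hd : 0 < d) (hL : L = (t - 1) / (2 * d))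
    (hN : L ≤ N) :
    ((∑ x ∈ Icc 1 N, (t - (2 * (d * x) + 1)) : ℕ) : ℚ) = L * (t - 1) - d * L * (L + 1) := by
  have hzero : ∀ x ∈ Icc 1 N, x ∉ Icc 1 L → t - (2 * (d * x) + 1) = 0 := by
    intro x hx hxL
    simp only [mem_Icc] at hx hxL
    have h := (Nat.div_lt_iff_lt_mul (by positivity)).1 (hL ▸ (by omega : L < x))
    have : x * (2 * d) = 2 * (d * x) := by ring
    omega
  have hcast : ∀ x ∈ Icc 1 L, ((t - (2 * (d * x) + 1) : ℕ) : ℚ) = (t - 1) - 2 * d * x := by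
    intro x hx
    simp only [mem_Icc] at hx
    have h1 : x * (2 * d) ≤ L * (2 * d) := Nat.mul_le_mul_right _ hx.2
    have h2 := hL ▸ Nat.div_mul_le_self (t - 1) (2 * d)
    have h3 : x * (2 * d) = 2 * (d * x) := by ring
    have h4 : 0 < d * x := Nat.mul_pos hd hx.1
    rw [Nat.cast_sub (by omega)]
    push_cast
    ring
  rw [← sum_subset (Icc_subset_Icc_right hN) hzero, Nat.cast_sum, sum_congr rfl hcast,
    sum_Icc_sub_two_mul_mul]

theorem cast_sum_Icc_sum_Icc_tsub (t K N : ℕ) (ht : t = 2 * K + 1) (hN : K ≤ N) :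
    ((∑ x ∈ Icc 1 N, ∑ y ∈ Icc 1 N, (t - (2 * (x + y) + 1)) : ℕ) : ℚ) =
      K * (K - 1) * (K - 2) / 3 := by
  have hinner : ∀ x ∈ Icc 1 N, ((∑ y ∈ Icc 1 N, (t - (2 * (x + y) + 1)) : ℕ) : ℚ) =
      ((K - x : ℕ) : ℚ) * ((K - x : ℕ) - 1) := by
    intro x _
    have hshift : ∑ y ∈ Icc 1 N, (t - (2 * (x + y) + 1)) =
        ∑ y ∈ Icc 1 N, (t - 2 * x - (2 * (1 * y) + 1)) :=
      sum_congr rfl fun y _ => by omega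
    rw [hshift, cast_sum_Icc_tsub (t - 2 * x) 1 N (K - x) one_pos (by omega) (by omega)]
    rcases le_or_gt x K with hx | hx
    · rw [Nat.cast_sub (by omega : 2 * x ≤ t), Nat.cast_sub hx, ht]
      push_cast
      ring
    · simp [Nat.sub_eq_zero_of_le hx.le]
  have hzero : ∀ x ∈ Icc 1 N, x ∉ Icc 1 K → ((K - x : ℕ) : ℚ) * ((K - x : ℕ) - 1) = 0 := by
    intro x hx hxK
    simp only [mem_Icc] at hx hxK
    simp [Nat.sub_eq_zero_of_le (by omega : K ≤ x)]
  rw [Nat.cast_sum, sum_congr rfl hinner, ← sum_subset (Icc_subset_Icc_right hN) hzero,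
    ← Ico_add_one_right_eq_Icc, sum_Ico_reflect (fun j => (j : ℚ) * (j - 1)) 1 le_rfl,
    Nat.add_sub_cancel, Nat.sub_self, ← range_eq_Ico]
  exact sum_range_induction _ (fun n : ℕ => (n : ℚ) * (n - 1) * (n - 2) / 3) (by simp) K
    fun k _ => by push_cast; ring

theorem c3_add_four_mul_eq (t : ℕ) :
    c3 t + 4 * (∑ x ∈ Icc 1 t, (t - (2 * (2 * x) + 1)) +
        2 * ∑ x ∈ Icc 1 t, (t - (2 * (3 * x) + 1))) =
      4 * ∑ x ∈ Icc 1 t, ∑ y ∈ Icc 1 t, (t - (2 * (x + y) + 1)) := by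
  rw [c3_eq_four_mul_sum,
    sum_Icc_sum_Icc_eq_sum_lucasGeneric_add t (fun n => t - (2 * n + 1)) fun n hn => by omega,
    smul_eq_mul]
  ring

theorem c3_formula_mod12_5_9_general (t : ℕ) (h : t % 12 = 5 ∨ t % 12 = 9) :
    (c3 t : ℚ) = ((t : ℚ) ^ 3 - 16 * (t : ℚ) ^ 2 + 73 * (t : ℚ) - 90) / 6 := by
  have hcount := congrArg (Nat.cast : ℕ → ℚ) (c3_add_four_mul_eq t)
  simp only [Nat.cast_add, Nat.cast_mul, Nat.cast_ofNat] at hcount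
  obtain ⟨m, rfl | rfl⟩ : ∃ m, t = 12 * m + 5 ∨ t = 12 * m + 9 := ⟨t / 12, by omega⟩
  · rw [cast_sum_Icc_sum_Icc_tsub _ (6 * m + 2) _ (by ring) (by omega),
      cast_sum_Icc_tsub _ 2 _ (3 * m + 1) (by norm_num) (by omega) (by omega),
      cast_sum_Icc_tsub _ 3 _ (2 * m) (by norm_num) (by omega) (by omega)] at hcount
    push_cast at hcount ⊢
    linear_combination hcount
  · rw [cast_sum_Icc_sum_Icc_tsub _ (6 * m + 4) _ (by ring) (by omega),
      cast_sum_Icc_tsub _ 2 _ (3 * m + 2) (by norm_num) (by omega) (by omega),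
      cast_sum_Icc_tsub _ 3 _ (2 * m + 1) (by norm_num) (by omega) (by omega)] at hcount
    push_cast at hcount ⊢
    linear_combination hcount

theorem c3_formula_mod12_5_9 (t : ℕ) (ht : 0 < t) (h : t % 12 = 5 ∨ t % 12 = 9) :
    (c3 t : ℚ) = ((t : ℚ) ^ 3 - 16 * (t : ℚ) ^ 2 + 73 * (t : ℚ) - 90) / 6 :=
  c3_formula_mod12_5_9_general t h
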